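/- Let f be an affine permutation of period n, and consider the linear ODE system ∂x_i(t)/∂t = x_{f(i)}(t) − x_i(t) for i ∈ ℤ with the constraint x_{i+n}(t) = x_i(t) + 1. If f has a single cycle C with n_f(C) = n and k_f(C) = k, then every solution satisfies x_i(t) = (k/n)·t + c_i + o(1) as t → ∞, for constants c_i; in particular ∂x_i/∂t → k/n for all i. -/

import Mathlib

open Filter Topology

/-- An affine permutation of period `n`: a bijection `f : ℤ → ℤ` with `f (i + n) = f i + n`. -/
def IsAffinePerm (n : ℕ) (f : ℤ → ℤ) : Prop :=
  Function.Bijective f ∧ ∀ i : ℤ, f (i + n) = f i + n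

/-- A set `C ⊆ ℤ` is nonempty, `n`-periodic and `f`-closed. -/
def IsClosedSet (n : ℕ) (f : ℤ → ℤ) (C : Set ℤ) : Prop :=
  C.Nonempty ∧ (∀ i : ℤ, i ∈ C ↔ i + n ∈ C) ∧ (∀ i : ℤ, i ∈ C ↔ f i ∈ C)

/-- A cycle of `f`: a minimal (by inclusion) nonempty `n`-periodic `f`-closed set. -/
def IsCycleOf (n : ℕ) (f : ℤ → ℤ) (C : Set ℤ) : Prop :=
  IsClosedSet n f C ∧ ∀ C' ⊆ C, IsClosedSet n f C' → C' = C

/-- `n_f(C) = #(C ∩ {1,…,n})`. -/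
noncomputable def nOf (n : ℕ) (C : Set ℤ) : ℕ :=
  (C ∩ Set.Icc (1 : ℤ) (n : ℤ)).ncard

/-- `k(f) = (1/n) ∑_{i=1}^n (f i - i)`, as a rational number. -/
noncomputable def kOf (n : ℕ) (f : ℤ → ℤ) : ℚ :=
  ((∑ i ∈ Finset.Icc (1 : ℤ) (n : ℤ), (f i - i) : ℤ) : ℚ) / (n : ℚ)

/-!
Along the orbit `i, f i, f² i, …` the velocities `w_j = x_{f^{j+1} i} - x_{f^j i}` solve the
circulant system `w_j' = w_{j+1} - w_j`. Since `f` has a single cycle, the orbit of `i` meets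
every residue class mod `n` exactly once, so `f^n i - i = ∑_{m=1}^n (f m - m) = k n`; hence the
system is `n`-periodic in `j` and `∑_{j<n} w_j = x_{f^n i} - x_i = k` is conserved. The energy
`∑_j (w_j - k/n)²` decreases at rate `∑_j (w_{j+1} - w_j)²`, which by a discrete Poincaré
inequality is at least the energy divided by `n²`, so `w_j → k/n` exponentially fast. Then
`x_i - (k/n) t` has an integrable derivative `w_0 - k/n` and converges.
-/

open Finset Real

theorem Int.map_add_mul_of_map_add {G : Type*} [AddGroup G] {g : ℤ → G} {p : ℤ} {d : G}
    (h : ∀ m, g (m + p) = g m + d) (m c : ℤ) : g (m + c * p) = g m + c • d := by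
  induction c using Int.induction_on with
  | zero => simp
  | succ c ih => rw [add_mul, one_mul, ← add_assoc, h, ih, add_zsmul, one_zsmul, add_assoc]
  | pred c ih =>
    rw [← add_right_cancel_iff (a := d), ← h, sub_mul, one_mul, add_sub_assoc', sub_add_cancel,
      ih]
    simp [sub_zsmul, add_assoc]

theorem ZMod.sum_Icc_intCast {n : ℕ} [NeZero n] {M : Type*} [AddCommMonoid M] (g : ZMod n → M) :
    ∑ m ∈ Icc (1 : ℤ) n, g m = ∑ a, g a := by
  refine sum_nbij' (fun m => (m : ZMod n)) (fun a => ((a - 1).val : ℤ) + 1)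
    (fun _ _ => mem_univ _) (fun a _ => ?_) (fun m hm => ?_) (fun a _ => ?_)
    (fun _ _ => rfl)
  · have := (a - 1).val_lt
    simp only [mem_Icc]
    omega
  · simp only [mem_Icc] at hm
    have : ((m : ZMod n) - 1) = ((m - 1 : ℤ) : ZMod n) := by push_cast; rfl
    rw [this, ZMod.val_intCast, Int.emod_eq_of_lt (by omega) (by omega)]
    ring
  · simp

theorem Equiv.Perm.IsCycleOn.sum_range_card_pow_apply {α M : Type*} [AddCommMonoid M]
    {σ : Equiv.Perm α} {s : Finset α} {a : α} (hσ : σ.IsCycleOn s) (ha : a ∈ s) (g : α → M) :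
    ∑ j ∈ range s.card, g ((σ ^ j) a) = ∑ b ∈ s, g b := by
  refine sum_nbij (fun j => (σ ^ j) a) (fun j _ => hσ.1.mapsTo.perm_pow j ha)
    (fun j hj l hl hjl => ?_) (fun b hb => ?_) (fun _ _ => rfl)
  · simp only [coe_range, Set.mem_Iio] at hj hl
    exact Nat.ModEq.eq_of_lt_of_lt ((hσ.pow_apply_eq_pow_apply ha).1 hjl) hj hl
  · obtain ⟨j, hj, rfl⟩ := hσ.exists_pow_eq ha hb
    exact ⟨j, by simpa using hj, rfl⟩

namespace IsAffinePerm

variable {n : ℕ} {f : ℤ → ℤ}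

theorem map_add_mul (hf : IsAffinePerm n f) (m c : ℤ) : f (m + c * n) = f m + c * n := by
  simpa using Int.map_add_mul_of_map_add hf.2 m c

theorem map_eq_map_emod_add (hf : IsAffinePerm n f) (m : ℤ) : f m = f (m % n) + m / n * n := by
  conv_lhs => rw [← Int.emod_add_ediv_mul m n]
  exact hf.map_add_mul _ _

def residueMap (n : ℕ) (f : ℤ → ℤ) (a : ZMod n) : ZMod n := f a.val

variable [NeZero n]

theorem residueMap_intCast (hf : IsAffinePerm n f) (m : ℤ) :
    residueMap n f m = f m := by
  rw [residueMap, ZMod.val_intCast, hf.map_eq_map_emod_add m]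
  simp

theorem bijective_residueMap (hf : IsAffinePerm n f) : Function.Bijective (residueMap n f) := by
  have hsurj : Function.Surjective (residueMap n f) := fun b => by
    obtain ⟨m, hm⟩ := hf.1.2 b.val
    exact ⟨m, by simp [hf.residueMap_intCast, hm]⟩
  exact ⟨Finite.injective_iff_surjective.2 hsurj, hsurj⟩

noncomputable def residuePerm (hf : IsAffinePerm n f) : Equiv.Perm (ZMod n) :=
  Equiv.ofBijective _ hf.bijective_residueMap

theorem residuePerm_intCast (hf : IsAffinePerm n f) (m : ℤ) : hf.residuePerm m = f m :=
  hf.residueMap_intCast m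

theorem isCycleOn_residuePerm (hf : IsAffinePerm n f) (hcyc : IsCycleOf n f Set.univ) :
    hf.residuePerm.IsCycleOn Set.univ := by
  refine ⟨Set.bijOn_univ.2 hf.residuePerm.bijective, fun a _ b _ => ?_⟩
  have hclosed : IsClosedSet n f {m : ℤ | hf.residuePerm.SameCycle a m} := by
    refine ⟨⟨a.val, by simp [Equiv.Perm.SameCycle.refl]⟩, fun m => by simp, fun m => ?_⟩
    simp only [Set.mem_ofPred_eq, ← hf.residuePerm_intCast]
    exact Equiv.Perm.sameCycle_apply_right.symm
  have hb : (b.val : ℤ) ∈ {m : ℤ | hf.residuePerm.SameCycle a m} := by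
    rw [hcyc.2 _ (Set.subset_univ _) hclosed]; trivial
  simpa using hb

theorem iterate_card_sub_self (hf : IsAffinePerm n f) (hcyc : IsCycleOf n f Set.univ) (i : ℤ) :
    f^[n] i - i = ∑ m ∈ Icc (1 : ℤ) n, (f m - m) := by
  set σ := hf.residuePerm
  set D : ZMod n → ℤ := fun a => f a.val - a.val
  have hD : ∀ m : ℤ, f m - m = D m := fun m => by
    simp only [D, ZMod.val_intCast]
    linarith [hf.map_eq_map_emod_add m, Int.emod_add_ediv_mul m n]
  have horbit : ∀ j : ℕ, ((f^[j] i : ℤ) : ZMod n) = (σ ^ j) i := fun j => by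
    induction j with
    | zero => rfl
    | succ j ih =>
      rw [Function.iterate_succ_apply', pow_succ', Equiv.Perm.mul_apply, ← ih]
      exact (hf.residuePerm_intCast _).symm
  have hcycle : σ.IsCycleOn (univ : Finset (ZMod n)) := by
    simpa using hf.isCycleOn_residuePerm hcyc
  calc f^[n] i - i = ∑ j ∈ range n, (f (f^[j] i) - f^[j] i) := by
        simpa [Function.iterate_succ_apply'] using (sum_range_sub (f^[·] i) n).symm
    _ = ∑ j ∈ range (univ : Finset (ZMod n)).card, D ((σ ^ j) i) := by
        simp only [hD, horbit, card_univ, ZMod.card]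
    _ = ∑ m ∈ Icc (1 : ℤ) n, (f m - m) := by
        rw [hcycle.sum_range_card_pow_apply (mem_univ _), ← ZMod.sum_Icc_intCast]
        simp only [hD]

end IsAffinePerm

theorem sum_range_sq_le_of_sum_eq_zero {n : ℕ} (u : ℕ → ℝ) (hu : ∑ j ∈ range n, u j = 0) :
    ∑ j ∈ range n, u j ^ 2 ≤ n ^ 2 * ∑ j ∈ range n, (u (j + 1) - u j) ^ 2 := by
  set L := ∑ r ∈ range n, |u (r + 1) - u r|
  have hpath : ∀ j l, j ≤ l → l ≤ n → |u l - u j| ≤ L := fun j l hjl hln => by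
    rw [← sum_Ico_sub u hjl]
    refine (abs_sum_le_sum_abs _ _).trans
      (sum_le_sum_of_subset_of_nonneg ?_ fun _ _ _ => abs_nonneg _)
    intro r hr
    simp only [mem_Ico, mem_range] at hr ⊢
    omega
  -- `u` has mean zero, so each value is within the total variation `L` of zero.
  have hbound : ∀ j ∈ range n, |u j| ≤ L := fun j hj => by
    have hn : (0 : ℝ) < n := by exact_mod_cast Nat.zero_lt_of_lt (mem_range.1 hj)
    have hdist : ∀ l ∈ range n, |u j - u l| ≤ L := fun l hl => by
      rw [mem_range] at hj hl
      rcases le_total j l with h | h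
      · rw [abs_sub_comm]; exact hpath j l h hl.le
      · exact hpath l j h hj.le
    have hmul : (n : ℝ) * u j = ∑ l ∈ range n, (u j - u l) := by
      simp [sum_sub_distrib, hu]
    refine le_of_mul_le_mul_left ?_ hn
    calc (n : ℝ) * |u j| = |∑ l ∈ range n, (u j - u l)| := by
          rw [← hmul, abs_mul, abs_of_pos hn]
      _ ≤ ∑ l ∈ range n, L := (abs_sum_le_sum_abs _ _).trans (sum_le_sum hdist)
      _ = n * L := by simp
  have hL : L ^ 2 ≤ n * ∑ j ∈ range n, (u (j + 1) - u j) ^ 2 := by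
    simpa [sq_abs] using sq_sum_le_card_mul_sum_sq (s := range n)
      (f := fun r => |u (r + 1) - u r|)
  calc ∑ j ∈ range n, u j ^ 2 ≤ ∑ j ∈ range n, L ^ 2 :=
        sum_le_sum fun j hj => by
          simpa [sq_abs] using pow_le_pow_left₀ (abs_nonneg _) (hbound j hj) 2
    _ = n * L ^ 2 := by simp
    _ ≤ n * (n * ∑ j ∈ range n, (u (j + 1) - u j) ^ 2) := by gcongr
    _ = n ^ 2 * ∑ j ∈ range n, (u (j + 1) - u j) ^ 2 := by ring

section CyclicSystem

variable {n : ℕ} {u : ℝ → ℕ → ℝ}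

theorem sum_range_eq_of_cyclic
    (hode : ∀ j t, HasDerivAt (fun s => u s j) (u t (j + 1) - u t j) t)
    (hper : ∀ t, u t n = u t 0) (t : ℝ) :
    ∑ j ∈ range n, u t j = ∑ j ∈ range n, u 0 j := by
  have hderiv : ∀ s, HasDerivAt (fun s => ∑ j ∈ range n, u s j) 0 s := fun s => by
    refine (HasDerivAt.fun_sum fun j _ => hode j s).congr_deriv ?_
    rw [sum_range_sub (u s), hper, sub_self]
  exact is_const_of_deriv_eq_zero (fun s => (hderiv s).differentiableAt)
    (fun s => (hderiv s).deriv) t 0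

theorem hasDerivAt_sum_range_sq_of_cyclic
    (hode : ∀ j t, HasDerivAt (fun s => u s j) (u t (j + 1) - u t j) t)
    (hper : ∀ t, u t n = u t 0) (t : ℝ) :
    HasDerivAt (fun s => ∑ j ∈ range n, u s j ^ 2)
      (-∑ j ∈ range n, (u t (j + 1) - u t j) ^ 2) t := by
  refine (HasDerivAt.fun_sum fun j _ => (hode j t).pow 2).congr_deriv ?_
  calc ∑ j ∈ range n, ((2 : ℕ) * u t j ^ (2 - 1) * (u t (j + 1) - u t j))
      = ∑ j ∈ range n, ((u t (j + 1) ^ 2 - u t j ^ 2) - (u t (j + 1) - u t j) ^ 2) :=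
        sum_congr rfl fun j _ => by push_cast; ring
    _ = _ := by rw [sum_sub_distrib, sum_range_sub (fun j => u t j ^ 2), hper, sub_self, zero_sub]

theorem sum_range_sq_le_exp_of_cyclic
    (hode : ∀ j t, HasDerivAt (fun s => u s j) (u t (j + 1) - u t j) t)
    (hper : ∀ t, u t n = u t 0) (hsum : ∑ j ∈ range n, u 0 j = 0) {t : ℝ} (ht : 0 ≤ t) :
    ∑ j ∈ range n, u t j ^ 2 ≤ (∑ j ∈ range n, u 0 j ^ 2) * exp (-(n ^ 2 : ℝ)⁻¹ * t) := by
  set c : ℝ := (n ^ 2 : ℝ)⁻¹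
  set E : ℝ → ℝ := fun s => ∑ j ∈ range n, u s j ^ 2
  set D : ℝ → ℝ := fun s => ∑ j ∈ range n, (u s (j + 1) - u s j) ^ 2
  have hpoincare : ∀ s, c * E s ≤ D s := fun s =>
    inv_mul_le_of_le_mul₀ (by positivity) (sum_nonneg fun _ _ => sq_nonneg _)
      (sum_range_sq_le_of_sum_eq_zero (u s) ((sum_range_eq_of_cyclic hode hper s).trans hsum))
  have hderiv : ∀ s, HasDerivAt (fun s => exp (c * s) * E s) (exp (c * s) * (c * E s - D s)) s :=
    fun s => by
      refine (((hasDerivAt_id' s).const_mul c).exp.mul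
        (hasDerivAt_sum_range_sq_of_cyclic hode hper s)).congr_deriv ?_
      ring
  have hanti : Antitone fun s => exp (c * s) * E s :=
    antitone_of_hasDerivAt_nonpos hderiv fun s =>
      mul_nonpos_of_nonneg_of_nonpos (exp_pos _).le (sub_nonpos.2 (hpoincare s))
  have h := hanti ht
  simp only [mul_zero, exp_zero, one_mul] at h
  rw [neg_mul, exp_neg, ← div_eq_mul_inv, le_div_iff₀ (exp_pos _), mul_comm]
  exact h

theorem isBigO_sub_mean_of_cyclic
    (hode : ∀ j t, HasDerivAt (fun s => u s j) (u t (j + 1) - u t j) t)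
    (hper : ∀ t, u t n = u t 0) {j : ℕ} (hj : j < n) :
    (fun t => u t j - (∑ l ∈ range n, u 0 l) / n) =O[atTop]
      fun t => exp (-(2 * n ^ 2 : ℝ)⁻¹ * t) := by
  set M := (∑ l ∈ range n, u 0 l) / n
  set w : ℝ → ℕ → ℝ := fun t l => u t l - M
  have hwode : ∀ l t, HasDerivAt (fun s => w s l) (w t (l + 1) - w t l) t := fun l t =>
    ((hode l t).sub_const M).congr_deriv (sub_sub_sub_cancel_right _ _ _).symm
  have hwper : ∀ t, w t n = w t 0 := fun t => by simp only [w, hper]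
  have hwsum : ∑ l ∈ range n, w 0 l = 0 := by
    have hn : (n : ℝ) ≠ 0 := by exact_mod_cast (Nat.zero_lt_of_lt hj).ne'
    simp only [w, M, sum_sub_distrib, sum_const, card_range, nsmul_eq_mul]
    field_simp
    ring
  set E₀ := ∑ l ∈ range n, w 0 l ^ 2
  refine Asymptotics.IsBigO.of_bound √E₀ ((eventually_ge_atTop 0).mono fun t ht => ?_)
  have hsq : w t j ^ 2 ≤ E₀ * exp (-(n ^ 2 : ℝ)⁻¹ * t) :=
    (single_le_sum (f := fun l => w t l ^ 2) (fun _ _ => sq_nonneg _) (mem_range.2 hj)).trans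
      (sum_range_sq_le_exp_of_cyclic hwode hwper hwsum ht)
  have hexp : exp (-(n ^ 2 : ℝ)⁻¹ * t) = exp (-(2 * n ^ 2 : ℝ)⁻¹ * t) ^ 2 := by
    rw [← exp_nat_mul]; congr 1; field_simp; ring
  rw [hexp] at hsq
  have := abs_le_sqrt hsq
  rw [sqrt_mul' _ (sq_nonneg _), sqrt_sq (exp_pos _).le] at this
  simpa [abs_of_pos (exp_pos _)] using this

theorem tendsto_mean_of_cyclic
    (hode : ∀ j t, HasDerivAt (fun s => u s j) (u t (j + 1) - u t j) t)
    (hper : ∀ t, u t n = u t 0) {j : ℕ} (hj : j < n) :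
    Tendsto (fun t => u t j) atTop (𝓝 ((∑ l ∈ range n, u 0 l) / n)) := by
  have hn : (0 : ℝ) < n := by exact_mod_cast Nat.zero_lt_of_lt hj
  have hdecay : Tendsto (fun t : ℝ => exp (-(2 * n ^ 2 : ℝ)⁻¹ * t)) atTop (𝓝 0) :=
    tendsto_exp_comp_nhds_zero.2 <|
      (tendsto_const_mul_atBot_of_neg (neg_lt_zero.2 (by positivity))).2 tendsto_id
  simpa using ((isBigO_sub_mean_of_cyclic hode hper hj).trans_tendsto hdecay).add_const
    ((∑ l ∈ range n, u 0 l) / n)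

theorem integrableOn_sub_mean_of_cyclic
    (hode : ∀ j t, HasDerivAt (fun s => u s j) (u t (j + 1) - u t j) t)
    (hper : ∀ t, u t n = u t 0) {j : ℕ} (hj : j < n) :
    MeasureTheory.IntegrableOn (fun t => u t j - (∑ l ∈ range n, u 0 l) / n) (Set.Ioi 0) := by
  have hn : (0 : ℝ) < n := by exact_mod_cast Nat.zero_lt_of_lt hj
  have hcont : Continuous fun t => u t j - (∑ l ∈ range n, u 0 l) / n :=
    continuous_iff_continuousAt.2 fun t => (hode j t).continuousAt.sub continuousAt_const
  exact integrable_of_isBigO_exp_neg (by positivity) hcont.continuousOn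
    (isBigO_sub_mean_of_cyclic hode hper hj)

end CyclicSystem

theorem sum_Icc_sub_self_eq_of_kOf_eq {n : ℕ} {f : ℤ → ℤ} {k : ℤ} (hn : n ≠ 0)
    (hk : kOf n f = k) : ∑ m ∈ Icc (1 : ℤ) n, (f m - m) = k * n := by
  rw [kOf, div_eq_iff (by exact_mod_cast hn)] at hk
  exact_mod_cast hk

section OrbitIncrement

variable {n : ℕ} {f : ℤ → ℤ} {x : ℝ → ℤ → ℝ}

def orbitIncrement (f : ℤ → ℤ) (x : ℝ → ℤ → ℝ) (i : ℤ) (t : ℝ) (j : ℕ) : ℝ :=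
  x t (f (f^[j] i)) - x t (f^[j] i)

theorem hasDerivAt_orbitIncrement
    (hode : ∀ i t, HasDerivAt (fun s => x s i) (x t (f i) - x t i) t) (i : ℤ) (j : ℕ) (t : ℝ) :
    HasDerivAt (fun s => orbitIncrement f x i s j)
      (orbitIncrement f x i t (j + 1) - orbitIncrement f x i t j) t := by
  refine ((hode (f (f^[j] i)) t).sub (hode (f^[j] i) t)).congr_deriv ?_
  simp only [orbitIncrement, Function.iterate_succ_apply']

theorem sum_range_orbitIncrement (i : ℤ) (t : ℝ) (n : ℕ) :
    ∑ j ∈ range n, orbitIncrement f x i t j = x t (f^[n] i) - x t i := by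
  simpa [orbitIncrement, Function.iterate_succ_apply'] using
    sum_range_sub (fun j => x t (f^[j] i)) n

theorem orbitIncrement_card (hf : IsAffinePerm n f) {t : ℝ}
    (hx : ∀ m c : ℤ, x t (m + c * n) = x t m + c) {i k : ℤ} (hfn : f^[n] i = i + k * n) :
    orbitIncrement f x i t n = orbitIncrement f x i t 0 := by
  simp [orbitIncrement, hfn, hf.map_add_mul, hx]

end OrbitIncrement

/-- Consider the ODE system `x_i' (t) = x_{f i}(t) - x_i(t)` with `x_{i+n} = x_i + 1`,
for an affine permutation `f` of period `n` with a single cycle (so `n_f(C) = n`) and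
`k(f) = k`. Then every solution satisfies `x_i(t) = (k/n)·t + c_i + o(1)` as `t → ∞`;
in particular `x_i'(t) = x_{f i}(t) - x_i(t) → k/n`. -/
theorem stmt_16 (n : ℕ) (hn : 1 ≤ n) (f : ℤ → ℤ) (hf : IsAffinePerm n f)
    (k : ℤ) (hk : kOf n f = (k : ℚ))
    (hcyc : IsCycleOf n f Set.univ)
    (x : ℝ → ℤ → ℝ)
    (hper : ∀ t : ℝ, ∀ i : ℤ, x t (i + n) = x t i + 1)
    (hode : ∀ i : ℤ, ∀ t : ℝ, HasDerivAt (fun s => x s i) (x t (f i) - x t i) t) :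
    ∀ i : ℤ,
      (∃ c : ℝ, Tendsto (fun t => x t i - ((k : ℝ) / (n : ℝ)) * t) atTop (𝓝 c)) ∧
      Tendsto (fun t => x t (f i) - x t i) atTop (𝓝 ((k : ℝ) / (n : ℝ))) := by
  intro i
  have : NeZero n := ⟨by omega⟩
  have hfn : f^[n] i = i + k * n := by
    linarith [hf.iterate_card_sub_self hcyc i, sum_Icc_sub_self_eq_of_kOf_eq (NeZero.ne n) hk]
  have hx : ∀ t m c, x t (m + c * n) = x t m + c := fun t m c => by
    simpa using Int.map_add_mul_of_map_add (hper t) m c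
  have hmean : (∑ j ∈ range n, orbitIncrement f x i 0 j) / n = k / n := by
    rw [sum_range_orbitIncrement, hfn, hx, add_sub_cancel_left]
  have hode' := hasDerivAt_orbitIncrement hode i
  have hper' := fun t => orbitIncrement_card hf (hx t) hfn
  have hint := integrableOn_sub_mean_of_cyclic hode' hper' hn
  have hlim := tendsto_mean_of_cyclic hode' hper' hn
  rw [hmean] at hint hlim
  refine ⟨⟨_, MeasureTheory.tendsto_limUnder_of_hasDerivAt_of_integrableOn_Ioi
    (fun t _ => ?_) hint⟩, hlim⟩
  exact ((hode i t).sub ((hasDerivAt_id' t).const_mul _)).congr_deriv (by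
    simp only [orbitIncrement, Function.iterate_zero_apply]; ring)
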